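/- arXiv:1502.04340 — 2 statements merged into one kernel-verified Lean document; each statement's English description precedes it below -/
import Mathlib

section
/- Let d ≥ 2, k ≥ 2, and f ∈ T(d,n,k) with M_1(f) = {x'} a single point. Then the set of essential points of f with respect to T(d,n,k) is {x'} ∪ {x ∈ E_n^d : gcd(|x_1 - x'_1|, ..., |x_d - x'_d|) = 1}, and this set is the unique minimal teaching set of f with respect to T(d,n,k). -/
open Finset in
/-- The embedding of the integer cube `{0,…,n-1}^d` into `ℝ^d`. -/
def toR {d n : ℕ} (x : Fin d → Fin n) : Fin d → ℝ := fun i => (x i : ℝ)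

open Finset in
/-- `f` is a `k`-threshold function on `{0,…,n-1}^d`: its `1`-set is the solution
set of a system of `k` linear inequalities. -/
def IsKThreshold (d n k : ℕ) (f : (Fin d → Fin n) → Bool) : Prop :=
  ∃ (a : Fin k → ℝ) (b : Fin k → Fin d → ℝ),
    ∀ x, f x = true ↔ ∀ i, ∑ j, b i j * (x j : ℝ) ≤ a i

/-- The class `T(d,n,k)` of `k`-threshold functions. -/
def TClass (d n k : ℕ) : Set ((Fin d → Fin n) → Bool) := {f | IsKThreshold d n k f}

/-- The convex hull of the `1`-set of `f` (that is, `P(f)`). -/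
def hullOne (d n : ℕ) (f : (Fin d → Fin n) → Bool) : Set (Fin d → ℝ) :=
  convexHull ℝ (toR '' {x | f x = true})

/-- `f` belongs to `T(d,n,*)`: its `1`-set equals `Conv(M₁(f)) ∩ E_n^d`. -/
def LatticeConvex {d n : ℕ} (f : (Fin d → Fin n) → Bool) : Prop :=
  ∀ x, f x = true ↔ toR x ∈ hullOne d n f

/-- The class `T(d,n,*)` of all `k`-threshold functions for all `k`. -/
def TStar (d n : ℕ) : Set ((Fin d → Fin n) → Bool) := {f | LatticeConvex f}

/-- `T` is a teaching set of `f` with respect to the class `C`. -/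
def TeachingSet {α : Type*} (C : Set (α → Bool)) (f : α → Bool) (T : Set α) : Prop :=
  ∀ g ∈ C, (∀ x ∈ T, g x = f x) → g = f

/-- `x` is an essential point of `f` with respect to the class `D`. -/
def Essential {α : Type*} (D : Set (α → Bool)) (f : α → Bool) (x : α) : Prop :=
  ∃ g ∈ D, g x ≠ f x ∧ ∀ y, y ≠ x → g y = f y

/-- The set of vertices of `P(f)` (as lattice points). -/
def VertSet (d n : ℕ) (f : (Fin d → Fin n) → Bool) : Set (Fin d → Fin n) :=
  {x | toR x ∈ Set.extremePoints ℝ (hullOne d n f)}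

/-- The set `D(f) = {x ∈ M₀(f) : Conv(P(f) ∪ {x}) ∩ M₀(f) = {x}}`. -/
def DSet (d n : ℕ) (f : (Fin d → Fin n) → Bool) : Set (Fin d → Fin n) :=
  {x | f x = false ∧
    ∀ y, toR y ∈ convexHull ℝ (toR '' {z | f z = true} ∪ {toR x}) → f y = false → y = x}

/-- The set `S(f) = {x'} ∪ {x : gcd(|x₁-x'₁|,…,|x_d-x'_d|) = 1}` for a function
whose `1`-set is the single point `x'`. -/
def SingletonEssential (d n : ℕ) (x' : Fin d → Fin n) : Set (Fin d → Fin n) :=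
  {x'} ∪ {x | Finset.univ.gcd (fun j => ((x j : ℤ) - (x' j : ℤ)).natAbs) = 1}

/-!
A `k`-threshold function has a convex `1`-set, so if it contains `x'` and another lattice point
`y`, it also contains the primitive point `x' + (y - x') / G` of the segment `[x', y]`, where `G`
is the gcd of the coordinates of `y - x'`. Hence a `k`-threshold function that agrees with `f`
at `x'` and at the primitive points equals `f`, and a point at which such a function differs
from `f` alone must be primitive.

Conversely, if `v = x - x'` is primitive, pick a Bézout vector `w` with `w ⬝ᵥ v = 1` and a
functional `p` that vanishes on `v` but on no difference `z - x'` off the line `x' + ℝ v`.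
For `M` large, the slab `0 ≤ (w - M p) ⬝ᵥ (z - x') ≤ 1`, an intersection of two half-spaces,
contains exactly the lattice points `x'` and `x` of the cube. The constant `false` function
shows that `x'` itself is essential.
-/

open Finset Matrix

lemma Finset.natAbs_gcd {ι : Type*} (s : Finset ι) (u : ι → ℤ) :
    (s.gcd u).natAbs = s.gcd fun i => (u i).natAbs := by
  classical
  induction s using Finset.induction with
  | empty => simp
  | insert a s ha ih => rw [gcd_insert, gcd_insert, Int.natAbs_gcd, Int.gcd_eq_natAbs, ih]; rfl

lemma Finset.gcd_int_nonneg {ι : Type*} (s : Finset ι) (u : ι → ℤ) : 0 ≤ s.gcd u := by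
  rw [← Finset.normalize_gcd, ← Int.abs_eq_normalize]
  exact abs_nonneg _

lemma Finset.gcd_eq_one_iff_natAbs {ι : Type*} (s : Finset ι) (u : ι → ℤ) :
    s.gcd u = 1 ↔ (s.gcd fun i => (u i).natAbs) = 1 := by
  have := s.gcd_int_nonneg u
  rw [← Finset.natAbs_gcd]
  omega

lemma exists_forall_pow_dotProduct_ne_zero {d : ℕ} (R : Finset (Fin d → ℝ)) (h0 : 0 ∉ R) :
    ∃ t : ℝ, ∀ r ∈ R, (fun j : Fin d => t ^ (j : ℕ)) ⬝ᵥ r ≠ 0 := by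
  classical
  have hroots : ∀ r ∈ R, {t : ℝ | (Polynomial.ofFn d r).IsRoot t}.Finite := fun r hr =>
    Polynomial.finite_setOfPred_isRoot fun h =>
      h0 (Polynomial.injective_ofFn d (h.trans (map_zero _).symm) ▸ hr)
  obtain ⟨t, ht⟩ := (Set.Finite.biUnion R.finite_toSet hroots).infinite_compl.nonempty
  refine ⟨t, fun r hr hzero => ht (Set.mem_biUnion hr ?_)⟩
  simpa [Polynomial.ofFn_eq_sum_monomial, Polynomial.eval_finsetSum, dotProduct, mul_comm]
    using hzero

lemma exists_dotProduct_eq_zero_and_ne_zero {d : ℕ} {v : Fin d → ℝ} (hv : v ≠ 0)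
    (U : Finset (Fin d → ℝ)) (hU : ∀ u ∈ U, ∀ a : ℝ, u ≠ a • v) :
    ∃ p : Fin d → ℝ, p ⬝ᵥ v = 0 ∧ ∀ u ∈ U, p ⬝ᵥ u ≠ 0 := by
  classical
  set S := v ⬝ᵥ v
  have hS : S ≠ 0 := fun h => hv (dotProduct_self_eq_zero.mp h)
  -- `r u` vanishes only on `ℝ v`, and `p ⬝ᵥ u = e ⬝ᵥ r u` for the `p` built from the moment
  -- vector `e` below.
  let r : (Fin d → ℝ) → Fin d → ℝ := fun u => S • u - (u ⬝ᵥ v) • v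
  obtain ⟨t, ht⟩ := exists_forall_pow_dotProduct_ne_zero (U.image r) <| by
    simp only [mem_image, not_exists, not_and]
    intro u hu hru
    apply hU u hu ((u ⬝ᵥ v) / S)
    rw [sub_eq_zero] at hru
    rw [div_eq_inv_mul, mul_smul, ← hru, inv_smul_smul₀ hS]
  set e : Fin d → ℝ := fun j => t ^ (j : ℕ)
  refine ⟨S • e - (e ⬝ᵥ v) • v, ?_, fun u hu => ?_⟩
  · simp only [sub_dotProduct, smul_dotProduct, smul_eq_mul, S]
    ring
  · convert ht (r u) (mem_image_of_mem r hu) using 1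
    simp only [r, sub_dotProduct, dotProduct_sub, smul_dotProduct, dotProduct_smul, smul_eq_mul,
      dotProduct_comm u v]
    ring

lemma sub_mul_notMem_Icc_of_abs_add_two_le {x y M : ℝ} (h : |x| + 2 ≤ M * |y|) :
    x - M * y ∉ Set.Icc 0 1 := by
  rintro ⟨h₀, h₁⟩
  have := le_abs_self x
  have := neg_abs_le x
  rcases le_total 0 y with hy | hy
  · rw [abs_of_nonneg hy] at h; linarith
  · rw [abs_of_nonpos hy] at h; linarith

lemma eq_dotProduct_smul_of_cast_eq_smul {d : ℕ} {v w : Fin d → ℤ} (hwv : w ⬝ᵥ v = 1)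
    {u : Fin d → ℤ} {a : ℝ} (ha : (fun j => (u j : ℝ)) = a • fun j => (v j : ℝ)) :
    u = (w ⬝ᵥ u) • v := by
  have hwu : ((w ⬝ᵥ u : ℤ) : ℝ) = a := by
    have hcast : ∀ x y : Fin d → ℤ, ((x ⬝ᵥ y : ℤ) : ℝ) = (fun j => (x j : ℝ)) ⬝ᵥ fun j => (y j : ℝ) :=
      fun x y => by simp [dotProduct]
    rw [hcast, ha, dotProduct_smul, ← hcast, hwv, Int.cast_one, smul_eq_mul, mul_one]
  refine funext fun j => ?_
  have hj := congrFun ha j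
  rw [← hwu, Pi.smul_apply, smul_eq_mul] at hj
  simpa using (by exact_mod_cast hj : u j = (w ⬝ᵥ u) * v j)

lemma smul_eq_zero_or_smul_eq_self_iff {d : ℕ} {v : Fin d → ℤ} (hv : v ≠ 0) (m : ℤ) :
    m • v = 0 ∨ m • v = v ↔ m = 0 ∨ m = 1 := by
  rw [smul_eq_zero, or_iff_left hv]
  nth_rw 2 [← one_smul ℤ v]
  rw [smul_left_inj hv]

lemma exists_slab_inter_eq_pair {d : ℕ} {v : Fin d → ℤ} (hv : univ.gcd v = 1)
    (U : Finset (Fin d → ℤ)) :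
    ∃ c : Fin d → ℝ, ∀ u ∈ U,
      (0 ≤ c ⬝ᵥ (fun j => (u j : ℝ)) ∧ c ⬝ᵥ (fun j => (u j : ℝ)) ≤ 1 ↔ u = 0 ∨ u = v) := by
  classical
  let ι : (Fin d → ℤ) → Fin d → ℝ := fun u j => u j
  have hι_smul : ∀ (m : ℤ) u, ι (m • u) = (m : ℝ) • ι u := fun m u => funext fun j => by simp [ι]
  obtain ⟨w, hw⟩ := univ.gcd_eq_sum_mul v
  have hwv : w ⬝ᵥ v = 1 := by rw [dotProduct_comm, dotProduct, ← hw, hv]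
  have hwvR : ι w ⬝ᵥ ι v = 1 := by simpa [ι, dotProduct] using congrArg (Int.cast : ℤ → ℝ) hwv
  have hιv : ι v ≠ 0 := fun h => by simp [h] at hwvR
  set bad := U.filter fun u => ∀ m : ℤ, u ≠ m • v
  have hbad : ∀ u ∈ bad, ∀ a : ℝ, ι u ≠ a • ι v := fun u hu a ha =>
    (mem_filter.mp hu).2 _ (eq_dotProduct_smul_of_cast_eq_smul hwv ha)
  obtain ⟨p, hpv, hpu⟩ := exists_dotProduct_eq_zero_and_ne_zero hιv (bad.image ι)
    (by simpa only [forall_mem_image] using hbad)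
  obtain ⟨M, hM⟩ := (bad.image fun u => (|ι w ⬝ᵥ ι u| + 2) / |p ⬝ᵥ ι u|).exists_le
  refine ⟨ι w - M • p, fun u hu => ?_⟩
  change 0 ≤ (ι w - M • p) ⬝ᵥ ι u ∧ (ι w - M • p) ⬝ᵥ ι u ≤ 1 ↔ _
  rw [sub_dotProduct, smul_dotProduct, smul_eq_mul]
  by_cases hline : ∃ m : ℤ, u = m • v
  · obtain ⟨m, rfl⟩ := hline
    have hv₀ : v ≠ 0 := fun h => hιv (funext fun j => by simp [h, ι])
    rw [hι_smul, dotProduct_smul, dotProduct_smul, hwvR, hpv, smul_eq_mul, smul_eq_mul,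
      mul_one, mul_zero, mul_zero, sub_zero, smul_eq_zero_or_smul_eq_self_iff hv₀]
    norm_cast
    omega
  · push Not at hline
    have hub : u ∈ bad := mem_filter.mpr ⟨hu, hline⟩
    have hpu' : p ⬝ᵥ ι u ≠ 0 := hpu _ (mem_image_of_mem ι hub)
    have hMu := hM _ (mem_image_of_mem _ hub)
    rw [div_le_iff₀ (abs_pos.mpr hpu')] at hMu
    refine iff_of_false (sub_mul_notMem_Icc_of_abs_add_two_le hMu) ?_
    rintro (rfl | rfl)
    · exact hline 0 (zero_smul _ _).symm
    · exact hline 1 (one_smul _ _).symm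

section Threshold

variable {d n k : ℕ} {g : (Fin d → Fin n) → Bool}

lemma isKThreshold_iff_dotProduct :
    IsKThreshold d n k g ↔ ∃ (a : Fin k → ℝ) (b : Fin k → Fin d → ℝ),
      ∀ x, g x = true ↔ ∀ i, b i ⬝ᵥ toR x ≤ a i :=
  Iff.rfl

lemma isKThreshold_const_false (hk : 0 < k) : IsKThreshold d n k fun _ => false :=
  ⟨fun _ => -1, fun _ _ => 0, fun x => by
    have : Nonempty (Fin k) := ⟨⟨0, hk⟩⟩
    simp⟩

lemma isKThreshold_of_slab (hk : 2 ≤ k) (c : Fin d → ℝ) (lo hi : ℝ)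
    (hg : ∀ x, g x = true ↔ lo ≤ c ⬝ᵥ toR x ∧ c ⬝ᵥ toR x ≤ hi) : IsKThreshold d n k g := by
  refine isKThreshold_iff_dotProduct.mpr
    ⟨fun i => if (i : ℕ) = 0 then hi else -lo, fun i => if (i : ℕ) = 0 then c else -c,
      fun x => (hg x).trans ⟨fun ⟨hlo, hhi⟩ i => ?_, fun h => ?_⟩⟩
  · dsimp only
    split_ifs
    · exact hhi
    · simpa [neg_dotProduct] using hlo
  · have h0 := h ⟨0, by omega⟩
    have h1 := h ⟨1, by omega⟩
    simp only [if_pos, if_neg one_ne_zero, neg_dotProduct, neg_le_neg_iff] at h0 h1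
    exact ⟨h1, h0⟩

lemma IsKThreshold.apply_eq_true_of_mem_segment (hg : IsKThreshold d n k g)
    {x y z : Fin d → Fin n} (hx : g x = true) (hy : g y = true)
    (hz : toR z ∈ segment ℝ (toR x) (toR y)) : g z = true := by
  obtain ⟨a, b, hab⟩ := isKThreshold_iff_dotProduct.mp hg
  have hconv : Convex ℝ {p : Fin d → ℝ | ∀ i, b i ⬝ᵥ p ≤ a i} := by
    simpa only [Set.ofPred_forall] using convex_iInter fun i =>
      convex_halfSpace_le ⟨dotProduct_add (b i), fun c p => dotProduct_smul c (b i) p⟩ (a i)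
  exact (hab z).mpr (hconv.segment_subset ((hab x).mp hx) ((hab y).mp hy) hz)

end Threshold

lemma exists_primitive_mem_segment {d n : ℕ} {x' y : Fin d → Fin n} (hne : y ≠ x') :
    ∃ z : Fin d → Fin n, z ≠ x' ∧ (univ.gcd fun j => ((z j : ℤ) - (x' j : ℤ)).natAbs) = 1 ∧
      toR z ∈ segment ℝ (toR x') (toR y) := by
  set u : Fin d → ℤ := fun j => (y j : ℤ) - x' j
  obtain ⟨j₀, hj₀⟩ : ∃ j, u j ≠ 0 := by
    by_contra! h
    exact hne (funext fun j => Fin.ext (by have := h j; simp only [u] at this; omega))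
  obtain ⟨m, hu, hm⟩ := extract_gcd u ⟨j₀, mem_univ _⟩
  set G := univ.gcd u
  have hum : ∀ j, (y j : ℤ) = x' j + G * m j := fun j => by
    have := hu j (mem_univ _); simp only [u] at this; omega
  have hG : 0 < G := by
    refine lt_of_le_of_ne (univ.gcd_int_nonneg u) fun h => hj₀ ?_
    exact gcd_eq_zero_iff.mp h.symm j₀ (mem_univ _)
  obtain ⟨z, hz⟩ : ∃ z : Fin d → Fin n, ∀ j, (z j : ℤ) = x' j + m j := by
    have hbound : ∀ j, 0 ≤ (x' j : ℤ) + m j ∧ (x' j : ℤ) + m j < n := fun j => by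
      have := hum j; have := (y j).isLt; have := (x' j).isLt
      rcases le_or_gt 0 (m j) with h | h <;> constructor <;> nlinarith
    exact ⟨fun j => ⟨((x' j : ℤ) + m j).toNat, by have := hbound j; omega⟩,
      fun j => by have := hbound j; simp only; omega⟩
  refine ⟨z, fun h => ?_, ?_, ?_⟩
  · have hm₀ := hz j₀
    rw [h, left_eq_add] at hm₀
    exact hj₀ (by simp [u, hum j₀, hm₀])
  · rw [← Finset.gcd_eq_one_iff_natAbs]
    simpa only [hz, add_sub_cancel_left] using hm
  · have hGR : (0 : ℝ) < G := by exact_mod_cast hG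
    refine ⟨1 - (G : ℝ)⁻¹, (G : ℝ)⁻¹, ?_, by positivity, by ring, funext fun j => ?_⟩
    · rw [sub_nonneg]; exact inv_le_one_of_one_le₀ (by exact_mod_cast hG)
    · have hzR : (z j : ℝ) = x' j + m j := by exact_mod_cast hz j
      have hyR : (y j : ℝ) = x' j + G * m j := by exact_mod_cast hum j
      simp only [toR, Pi.add_apply, Pi.smul_apply, smul_eq_mul, hzR, hyR]
      field_simp
      ring

lemma IsKThreshold.exists_primitive {d n k : ℕ} {g : (Fin d → Fin n) → Bool}
    (hg : IsKThreshold d n k g) {x' y : Fin d → Fin n} (hx' : g x' = true) (hy : g y = true)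
    (hne : y ≠ x') :
    ∃ z, g z = true ∧ z ≠ x' ∧ (univ.gcd fun j => ((z j : ℤ) - (x' j : ℤ)).natAbs) = 1 := by
  obtain ⟨z, hzx', hz, hseg⟩ := exists_primitive_mem_segment hne
  exact ⟨z, hg.apply_eq_true_of_mem_segment hx' hy hseg, hzx', hz⟩

lemma exists_isKThreshold_eq_pair {d n k : ℕ} (hk : 2 ≤ k) {x' x : Fin d → Fin n}
    (hx : (univ.gcd fun j => ((x j : ℤ) - (x' j : ℤ)).natAbs) = 1) :
    ∃ g : (Fin d → Fin n) → Bool, IsKThreshold d n k g ∧ ∀ z, g z = true ↔ z = x' ∨ z = x := by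
  classical
  let δ : (Fin d → Fin n) → Fin d → ℤ := fun z j => (z j : ℤ) - x' j
  have hδ : ∀ y z, δ y = δ z ↔ y = z := fun y z =>
    ⟨fun h => funext fun j => Fin.ext (by have := congrFun h j; simp only [δ] at this; omega),
      congrArg δ⟩
  have hδx' : δ x' = 0 := funext fun j => sub_self _
  obtain ⟨c, hc⟩ := exists_slab_inter_eq_pair ((univ.gcd_eq_one_iff_natAbs _).mpr hx) (univ.image δ)
  have hcδ : ∀ z, c ⬝ᵥ (fun j => (δ z j : ℝ)) = c ⬝ᵥ toR z - c ⬝ᵥ toR x' := fun z => by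
    rw [← dotProduct_sub]
    congr 1
    funext j
    simp [δ, toR]
  refine ⟨fun z => decide (c ⬝ᵥ toR x' ≤ c ⬝ᵥ toR z ∧ c ⬝ᵥ toR z ≤ c ⬝ᵥ toR x' + 1),
    isKThreshold_of_slab hk c _ _ fun z => decide_eq_true_iff, fun z => ?_⟩
  have hz := hc (δ z) (mem_image_of_mem δ (mem_univ z))
  rw [hcδ, ← hδx', hδ, hδ] at hz
  rw [decide_eq_true_iff, ← hz]
  constructor <;> rintro ⟨h₀, h₁⟩ <;> constructor <;> linarith

lemma Essential.mem_of_teachingSet {α : Type*} {C : Set (α → Bool)} {f : α → Bool} {x : α}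
    {T : Set α} (hx : Essential C f x) (hT : TeachingSet C f T) : x ∈ T := by
  by_contra hxT
  obtain ⟨g, hgC, hgx, hg⟩ := hx
  exact hgx (congrFun (hT g hgC fun y hy => hg y fun h => hxT (h ▸ hy)) x)

section SinglePoint

variable {d n k : ℕ} {f : (Fin d → Fin n) → Bool} {x' : Fin d → Fin n}

lemma essential_self_of_apply_eq_true_iff (hk : 0 < k) (hx' : ∀ y, f y = true ↔ y = x') :
    Essential (TClass d n k) f x' :=
  ⟨fun _ => false, isKThreshold_const_false hk, by simp [(hx' x').mpr rfl],
    fun y hy => (Bool.eq_false_iff.mpr fun h => hy ((hx' y).mp h)).symm⟩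

lemma essential_of_gcd_eq_one (hk : 2 ≤ k) (hx' : ∀ y, f y = true ↔ y = x') {s : Fin d → Fin n}
    (hs : (univ.gcd fun j => ((s j : ℤ) - (x' j : ℤ)).natAbs) = 1) :
    Essential (TClass d n k) f s := by
  obtain ⟨g, hg, hgs⟩ := exists_isKThreshold_eq_pair hk hs
  have hsx' : s ≠ x' := by
    rintro rfl
    simp only [sub_self, Int.natAbs_zero, gcd_eq_zero_iff.mpr fun _ _ => rfl] at hs
    exact zero_ne_one hs
  refine ⟨g, hg, ?_, fun y hy => ?_⟩
  · rw [Ne, Bool.eq_iff_iff, hgs, hx']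
    tauto
  · rw [Bool.eq_iff_iff, hgs, hx']
    tauto

lemma mem_singletonEssential_of_essential (hx' : ∀ y, f y = true ↔ y = x') {s : Fin d → Fin n}
    (hs : Essential (TClass d n k) f s) : s ∈ SingletonEssential d n x' := by
  obtain ⟨g, hg, hgs, hgf⟩ := hs
  by_cases hsx' : s = x'
  · exact Or.inl hsx'
  have hgs : g s = true := by simpa [(hx' s).not.mpr hsx'] using hgs
  have hgx' : g x' = true := by rw [hgf x' (Ne.symm hsx'), hx']
  obtain ⟨z, hgz, hzx', hz⟩ := hg.exists_primitive hgx' hgs hsx'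
  have hzs : z = s := by
    by_contra hzs
    rw [hgf z hzs, hx'] at hgz
    exact hzx' hgz
  exact Or.inr (hzs ▸ hz)

lemma teachingSet_singletonEssential (hx' : ∀ y, f y = true ↔ y = x') :
    TeachingSet (TClass d n k) f (SingletonEssential d n x') := by
  intro g hg hgf
  have hgx' : g x' = true := by rw [hgf x' (Or.inl rfl), hx']
  funext y
  rw [Bool.eq_iff_iff, hx']
  refine ⟨fun hgy => by_contra fun hyx' => ?_, fun hyx' => hyx' ▸ hgx'⟩
  obtain ⟨z, hgz, hzx', hz⟩ := hg.exists_primitive hgx' hgy hyx'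
  rw [hgf z (Or.inr hz), hx'] at hgz
  exact hzx' hgz

end SinglePoint

theorem stmt10_general (d n k : ℕ) (hk : 2 ≤ k)
    (f : (Fin d → Fin n) → Bool)
    (x' : Fin d → Fin n) (hx' : ∀ y, f y = true ↔ y = x') :
    {x | Essential (TClass d n k) f x} = SingletonEssential d n x' ∧
    TeachingSet (TClass d n k) f (SingletonEssential d n x') ∧
    (∀ T : Set (Fin d → Fin n), TeachingSet (TClass d n k) f T →
      SingletonEssential d n x' ⊆ T) := by
  have hess : ∀ s, Essential (TClass d n k) f s ↔ s ∈ SingletonEssential d n x' := by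
    refine fun s => ⟨mem_singletonEssential_of_essential hx', ?_⟩
    rintro (rfl | hs)
    · exact essential_self_of_apply_eq_true_iff (by omega) hx'
    · exact essential_of_gcd_eq_one hk hx' hs
  exact ⟨Set.ext hess, teachingSet_singletonEssential hx',
    fun T hT s hs => ((hess s).mpr hs).mem_of_teachingSet hT⟩

theorem stmt10 (d n k : ℕ) (hd : 2 ≤ d) (hn : 2 ≤ n) (hk : 2 ≤ k)
    (f : (Fin d → Fin n) → Bool) (hf : IsKThreshold d n k f)
    (x' : Fin d → Fin n) (hx' : ∀ y, f y = true ↔ y = x') :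
    {x | Essential (TClass d n k) f x} = SingletonEssential d n x' ∧
    TeachingSet (TClass d n k) f (SingletonEssential d n x') ∧
    (∀ T : Set (Fin d → Fin n), TeachingSet (TClass d n k) f T →
      SingletonEssential d n x' ⊆ T) :=
  stmt10_general d n k hk f x' hx'
end

section
/- Let f ∈ T(2,n,*) with P(f) = Conv(M_1(f)) having positive area. Then D(f) = ΔP(f) ∩ M_0(f), where ΔP(f) = P'(f) \ P(f) and P'(f) is the polygon obtained by relaxing each primitive edge inequality a_1 x_1 + a_2 x_2 ≤ a_0 (with gcd(a_1,a_2)=1 and a_i integers) of P(f) to a_1 x_1 + a_2 x_2 ≤ a_0 + 1. -/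
/-- `a₁ x₁ + a₂ x₂ ≤ a₀` is a primitive edge inequality of the planar convex set
`P`: the coefficients are coprime integers, the inequality holds on `P`, and the
corresponding line contains an edge of `P` (at least two points of `P`). -/
def IsEdgeIneq (P : Set (Fin 2 → ℝ)) (a₁ a₂ a₀ : ℤ) : Prop :=
  Int.gcd a₁ a₂ = 1 ∧ (∀ y ∈ P, (a₁ : ℝ) * y 0 + (a₂ : ℝ) * y 1 ≤ (a₀ : ℝ)) ∧
  ∃ u ∈ P, ∃ v ∈ P, u ≠ v ∧
    (a₁ : ℝ) * u 0 + (a₂ : ℝ) * u 1 = (a₀ : ℝ) ∧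
    (a₁ : ℝ) * v 0 + (a₂ : ℝ) * v 1 = (a₀ : ℝ)

/-- The extended polygon `P'(f)`: each primitive edge inequality of `P(f)`
relaxed by `1`. -/
def Pprime (n : ℕ) (f : (Fin 2 → Fin n) → Bool) : Set (Fin 2 → ℝ) :=
  {y | ∀ a₁ a₂ a₀ : ℤ, IsEdgeIneq (hullOne 2 n f) a₁ a₂ a₀ →
    (a₁ : ℝ) * y 0 + (a₂ : ℝ) * y 1 ≤ (a₀ : ℝ) + 1}

/-!
A lattice point `y ∉ P(f)` violates some primitive edge inequality `a ⬝ y ≤ a₀` by at least `1`: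
separate `y` from `P(f)`, then rotate the separating functional about a maximizing vertex until it
meets a second point of `M₁(f)`. Hence if `y ∈ Conv(P(f) ∪ {x})` with `x ∈ P'(f)`, writing `y` on a
segment from `x` to `P(f)` forces `y = x`.

Conversely, if `x ∈ M₀(f)` has `a ⬝ x ≥ a₀ + 2` for an edge `a ⬝ y = a₀` of `P(f)`, the triangle
spanned by `x` and two lattice points of that edge meets the line `a ⬝ y = a₀ + 1` in a segment of
length at least `(h - 1) / h` lattice steps starting at an offset in `(1 / h) ℤ`, `h = a ⬝ x - a₀`,
so it contains a lattice point there (the Pick-type step); that point lies in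
`Conv(P(f) ∪ {x}) ∩ M₀(f)` and differs from `x`.
-/

section DotProductGeometry

variable {ι : Type*} [Fintype ι]

theorem exists_dotProduct_lt_of_notMem_convexHull {S : Set (ι → ℝ)} (hS : S.Finite)
    {z : ι → ℝ} (hz : z ∉ convexHull ℝ S) : ∃ c : ι → ℝ, ∀ s ∈ S, c ⬝ᵥ s < c ⬝ᵥ z := by
  classical
  obtain ⟨φ, r, hφ, hr⟩ :=
    geometric_hahn_banach_closed_point (convex_convexHull ℝ S) (hS.isClosed_convexHull ℝ) hz
  have hφ_eq (y : ι → ℝ) : φ y = (fun i => φ fun j => if i = j then 1 else 0) ⬝ᵥ y := by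
    rw [dotProduct_comm]
    simpa [dotProduct] using
      LinearMap.pi_apply_eq_sum_univ φ.toLinearMap y
  exact ⟨_, fun s hs => by
    rw [← hφ_eq, ← hφ_eq]; exact (hφ s (subset_convexHull ℝ S hs)).trans hr⟩

theorem add_smul_dotProduct (c d y : ι → ℝ) (r : ℝ) :
    (c + r • d) ⬝ᵥ y = c ⬝ᵥ y + r * d ⬝ᵥ y := by
  rw [add_dotProduct, smul_dotProduct, smul_eq_mul]

theorem exists_tilt {S : Set (ι → ℝ)} (hS : S.Finite) {c d u : ι → ℝ}
    (hmax : ∀ s ∈ S, c ⬝ᵥ s ≤ c ⬝ᵥ u) (hd : ∃ s ∈ S, d ⬝ᵥ u < d ⬝ᵥ s) :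
    ∃ r : ℝ, (∀ s ∈ S, (c + r • d) ⬝ᵥ s ≤ (c + r • d) ⬝ᵥ u) ∧
      ∃ v ∈ S, d ⬝ᵥ u < d ⬝ᵥ v ∧ (c + r • d) ⬝ᵥ v = (c + r • d) ⬝ᵥ u := by
  obtain ⟨v, ⟨hvS, hv⟩, hmin⟩ := Set.exists_min_image {s ∈ S | d ⬝ᵥ u < d ⬝ᵥ s}
    (fun s => (c ⬝ᵥ u - c ⬝ᵥ s) / (d ⬝ᵥ s - d ⬝ᵥ u)) (hS.sep _) hd
  refine ⟨(c ⬝ᵥ u - c ⬝ᵥ v) / (d ⬝ᵥ v - d ⬝ᵥ u), fun s hs => ?_, v, hvS, hv, ?_⟩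
  · simp only [add_smul_dotProduct]
    rcases lt_or_ge (d ⬝ᵥ u) (d ⬝ᵥ s) with hs' | hs'
    · have := (le_div_iff₀ (sub_pos.2 hs')).1 (hmin s ⟨hs, hs'⟩)
      linarith
    · have := mul_nonpos_of_nonneg_of_nonpos
        (div_nonneg (sub_nonneg.2 (hmax v hvS)) (sub_nonneg.2 hv.le)) (sub_nonpos.2 hs')
      linarith [hmax s hs]
  · simp only [add_smul_dotProduct]
    have := div_mul_cancel₀ (c ⬝ᵥ u - c ⬝ᵥ v) (sub_pos.2 hv).ne'
    linarith

theorem exists_dotProduct_ne_of_interior_nonempty {S : Set (ι → ℝ)}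
    (hS : (interior (convexHull ℝ S)).Nonempty) {d : ι → ℝ} (hd : d ≠ 0) (r : ℝ) :
    ∃ s ∈ S, d ⬝ᵥ s ≠ r := by
  classical
  by_contra! h
  have htop : vectorSpan ℝ S = ⊤ := by
    rw [← direction_affineSpan, affineSpan_eq_top_of_nonempty_interior hS,
      AffineSubspace.direction_top]
  have hle : vectorSpan ℝ S ≤ LinearMap.ker (dotProductEquiv ℝ ι d) := by
    rw [vectorSpan_def, Submodule.span_le]
    rintro _ ⟨s, hs, t, ht, rfl⟩
    simp [dotProduct_sub, h s hs, h t ht]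
  have hdd : d ⬝ᵥ d = 0 := by
    simpa using hle (htop ▸ Submodule.mem_top : d ∈ vectorSpan ℝ S)
  exact hd (dotProduct_self_eq_zero.1 hdd)

theorem isLinearMap_dotProduct (c : ι → ℝ) : IsLinearMap ℝ (c ⬝ᵥ ·) :=
  ⟨dotProduct_add c, fun a y => dotProduct_smul a c y⟩

theorem dotProduct_le_of_mem_convexHull {S : Set (ι → ℝ)} {c : ι → ℝ} {r : ℝ}
    (hle : ∀ s ∈ S, c ⬝ᵥ s ≤ r) {y : ι → ℝ} (hy : y ∈ convexHull ℝ S) : c ⬝ᵥ y ≤ r :=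
  convexHull_min hle (convex_halfSpace_le (isLinearMap_dotProduct c) r) hy

theorem isExtreme_sep_dotProduct_eq {A : Set (ι → ℝ)} {c : ι → ℝ} {r : ℝ}
    (hle : ∀ y ∈ A, c ⬝ᵥ y ≤ r) : IsExtreme ℝ A {y ∈ A | c ⬝ᵥ y = r} := by
  refine ⟨Set.sep_subset _ _, ?_⟩
  rintro x₁ hx₁ x₂ hx₂ x ⟨-, hx⟩ ⟨a, b, ha, hb, hab, rfl⟩
  have h₁ := hle x₁ hx₁
  have h₂ := hle x₂ hx₂
  have : a * c ⬝ᵥ x₁ + b * c ⬝ᵥ x₂ = r := by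
    rw [dotProduct_add, dotProduct_smul, dotProduct_smul, smul_eq_mul, smul_eq_mul] at hx
    exact hx
  refine ⟨hx₁, h₁.eq_of_not_lt fun hlt => ?_⟩
  linarith [mul_lt_mul_of_pos_left hlt ha, mul_le_mul_of_nonneg_left h₂ hb.le,
    congrArg (· * r) hab]

theorem sep_convexHull_dotProduct_eq_subset {S : Set (ι → ℝ)} (hS : S.Finite) {c : ι → ℝ}
    {r : ℝ} (hle : ∀ s ∈ S, c ⬝ᵥ s ≤ r) :
    {y ∈ convexHull ℝ S | c ⬝ᵥ y = r} ⊆ convexHull ℝ {s ∈ S | c ⬝ᵥ s = r} := by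
  set F := {y ∈ convexHull ℝ S | c ⬝ᵥ y = r}
  have hext : IsExtreme ℝ (convexHull ℝ S) F :=
    isExtreme_sep_dotProduct_eq fun y hy => dotProduct_le_of_mem_convexHull hle hy
  have hclosed : IsClosed {y : ι → ℝ | c ⬝ᵥ y = r} :=
    isClosed_eq (continuous_const.dotProduct continuous_id) continuous_const
  have hcomp : IsCompact F := (hS.isCompact_convexHull ℝ).inter_right hclosed
  have hconv : Convex ℝ F :=
    (convex_convexHull ℝ S).inter (convex_hyperplane (isLinearMap_dotProduct c) r)
  have hext_sub : F.extremePoints ℝ ⊆ {s ∈ S | c ⬝ᵥ s = r} := fun x hx =>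
    ⟨extremePoints_convexHull_subset (hext.extremePoints_subset_extremePoints hx),
      (extremePoints_subset hx).2⟩
  calc F = closure (convexHull ℝ (F.extremePoints ℝ)) :=
        (closure_convexHull_extremePoints hcomp hconv).symm
    _ ⊆ closure (convexHull ℝ {s ∈ S | c ⬝ᵥ s = r}) := closure_mono (convexHull_mono hext_sub)
    _ = convexHull ℝ {s ∈ S | c ⬝ᵥ s = r} := ((hS.sep _).isClosed_convexHull ℝ).closure_eq

theorem exists_ne_dotProduct_eq_of_mem_convexHull {S : Set (ι → ℝ)} (hS : S.Finite)
    {c u v : ι → ℝ} {r : ℝ} (hle : ∀ s ∈ S, c ⬝ᵥ s ≤ r) (hu : u ∈ convexHull ℝ S)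
    (hv : v ∈ convexHull ℝ S) (huv : u ≠ v) (hur : c ⬝ᵥ u = r) (hvr : c ⬝ᵥ v = r) :
    ∃ s ∈ S, ∃ t ∈ S, s ≠ t ∧ c ⬝ᵥ s = r ∧ c ⬝ᵥ t = r := by
  by_contra! h
  have hsing : Set.Subsingleton {s ∈ S | c ⬝ᵥ s = r} :=
    fun s ⟨hs, hsr⟩ t ⟨ht, htr⟩ => by_contra fun hst => h s hs t ht hst hsr htr
  have hface := sep_convexHull_dotProduct_eq_subset hS hle
  rw [hsing.convex.convexHull_eq] at hface
  exact huv (hsing (hface ⟨hu, hur⟩) (hface ⟨hv, hvr⟩))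

theorem eq_of_mem_convexHull_insert {S : Set (ι → ℝ)} (hS : S.Nonempty) {c x y : ι → ℝ}
    {r t : ℝ} (hrt : r < t) (hle : ∀ s ∈ S, c ⬝ᵥ s ≤ r) (hx : c ⬝ᵥ x ≤ t)
    (hy : y ∈ convexHull ℝ (insert x S)) (hty : t ≤ c ⬝ᵥ y) : y = x := by
  rw [convexHull_insert hS, mem_convexJoin] at hy
  obtain ⟨_, rfl, q, hq, a, b, ha, hb, hab, rfl⟩ := hy
  have hcq := dotProduct_le_of_mem_convexHull hle hq
  rw [dotProduct_add, dotProduct_smul, dotProduct_smul, smul_eq_mul, smul_eq_mul] at hty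
  obtain rfl : b = 0 := by
    by_contra hb0
    linarith [congrArg (· * t) hab, mul_le_mul_of_nonneg_left hx ha,
      mul_le_mul_of_nonneg_left hcq hb,
      mul_lt_mul_of_pos_left hrt (hb.lt_of_ne' hb0)]
  simp [show a = 1 by linarith]

end DotProductGeometry

theorem exists_edge_separating {S : Set (Fin 2 → ℝ)} (hS : S.Finite)
    (harea : (interior (convexHull ℝ S)).Nonempty) {z : Fin 2 → ℝ} (hz : z ∉ convexHull ℝ S) :
    ∃ p : Fin 2 → ℝ, ∃ u ∈ S, ∃ v ∈ S, u ≠ v ∧ (∀ s ∈ S, p ⬝ᵥ s ≤ p ⬝ᵥ u) ∧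
      p ⬝ᵥ v = p ⬝ᵥ u ∧ p ⬝ᵥ u < p ⬝ᵥ z := by
  obtain ⟨c, hc⟩ := exists_dotProduct_lt_of_notMem_convexHull hS hz
  obtain ⟨u, huS, hu⟩ := Set.exists_max_image S (c ⬝ᵥ ·) hS
    (convexHull_nonempty_iff.1 (harea.mono interior_subset))
  have hw : z - u ≠ 0 := sub_ne_zero.2 fun h => hz (h ▸ subset_convexHull ℝ S huS)
  -- a normal to `z - u`; tilting `c` along it keeps `z` strictly beyond the level of `u`
  set d : Fin 2 → ℝ := ![-(z - u) 1, (z - u) 0]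
  have hdw : d ⬝ᵥ (z - u) = 0 := by simp [d, dotProduct, Fin.sum_univ_two]; ring
  have hd : d ≠ 0 := fun h => hw <| by
    ext i; fin_cases i
    · exact (congrFun h 1 : (z - u) 0 = 0)
    · exact neg_eq_zero.1 (congrFun h 0 : -(z - u) 1 = 0)
  obtain ⟨e, hez, he⟩ : ∃ e : Fin 2 → ℝ, e ⬝ᵥ z = e ⬝ᵥ u ∧ ∃ s ∈ S, e ⬝ᵥ u < e ⬝ᵥ s := by
    rw [dotProduct_sub, sub_eq_zero] at hdw
    obtain ⟨s, hs, hsu⟩ := exists_dotProduct_ne_of_interior_nonempty harea hd (d ⬝ᵥ u)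
    rcases hsu.lt_or_gt with h | h
    · exact ⟨-d, by simp [hdw], s, hs, by rw [neg_dotProduct, neg_dotProduct]; exact neg_lt_neg h⟩
    · exact ⟨d, hdw, s, hs, h⟩
  obtain ⟨r, hmax, v, hvS, hv, hvu⟩ := exists_tilt hS hu he
  refine ⟨c + r • e, u, huS, v, hvS, fun h => (h ▸ hv).false, hmax, hvu, ?_⟩
  rw [add_smul_dotProduct, add_smul_dotProduct, hez]
  linarith [hc u huS]

theorem exists_primitive_normal {p : Fin 2 → ℝ} (hp : p ≠ 0) {w : Fin 2 → ℤ} (hw : w ≠ 0)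
    (hpw : p ⬝ᵥ (Int.cast ∘ w) = 0) :
    ∃ a : Fin 2 → ℤ, Int.gcd (a 0) (a 1) = 1 ∧ ∃ κ : ℝ, 0 < κ ∧ p = κ • (Int.cast ∘ a) := by
  have hg : 0 < Int.gcd (w 0) (w 1) := Int.gcd_pos_iff.2 <| by
    by_contra! h
    exact hw (by ext i; fin_cases i <;> simp [h.1, h.2])
  obtain ⟨g, w₀, w₁, hg, hw₀₁, h₀, h₁⟩ := Int.exists_gcd_one' hg
  have hpw' : p 0 * w₀ + p 1 * w₁ = 0 := by
    have : (p 0 * w₀ + p 1 * w₁) * g = 0 := by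
      simp only [dotProduct, Fin.sum_univ_two, Function.comp_apply, h₀, h₁] at hpw
      push_cast at hpw
      linear_combination hpw
    exact (mul_eq_zero.1 this).resolve_right (by positivity)
  have hN : (0 : ℝ) < w₀ ^ 2 + w₁ ^ 2 := by
    have : w₀ ≠ 0 ∨ w₁ ≠ 0 := by
      by_contra! h
      simp [h.1, h.2] at hw₀₁
    have : (0 : ℤ) < w₀ ^ 2 + w₁ ^ 2 := by rcases this with h | h <;> positivity
    exact_mod_cast this
  set b : Fin 2 → ℤ := ![-w₁, w₀]
  have hb : Int.gcd (b 0) (b 1) = 1 := by simpa [b, Int.neg_gcd, Int.gcd_comm] using hw₀₁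
  set κ₀ := (p 1 * w₀ - p 0 * w₁) / (w₀ ^ 2 + w₁ ^ 2)
  have hpb : p = κ₀ • (Int.cast ∘ b) := by
    ext i
    fin_cases i
    · simp [b, κ₀]; field_simp; linear_combination (w₀ : ℝ) * hpw'
    · simp [b, κ₀]; field_simp; linear_combination (w₁ : ℝ) * hpw'
  rcases lt_trichotomy κ₀ 0 with hneg | hzero | hpos
  · refine ⟨-b, by simpa [Int.neg_gcd] using hb, -κ₀, neg_pos.2 hneg, ?_⟩
    rw [hpb]; ext i; simp
  · exact absurd (by simpa [hzero] using hpb) hp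
  · exact ⟨b, hb, κ₀, hpos, hpb⟩

theorem mem_convexHull_triple_of_smul_eq {E : Type*} [AddCommGroup E] [Module ℝ E]
    {p q r y : E} {α β γ : ℝ} (hα : 0 ≤ α) (hβ : 0 ≤ β) (hγ : 0 ≤ γ) (hpos : 0 < α + β + γ)
    (hy : (α + β + γ) • y = α • p + β • q + γ • r) : y ∈ convexHull ℝ {p, q, r} := by
  have hmem := Finset.univ.centerMass_mem_convexHull (w := ![α, β, γ]) (z := ![p, q, r])
    (s := {p, q, r}) (fun i _ => by fin_cases i <;> simpa) (by simpa [Fin.sum_univ_three])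
    (fun i _ => by fin_cases i <;> simp)
  convert hmem
  rw [Finset.centerMass, Fin.sum_univ_three, Fin.sum_univ_three]
  simp only [Matrix.cons_val_zero, Matrix.cons_val_one, Matrix.cons_val_two, Matrix.head_cons,
    Matrix.tail_cons, ← hy, smul_smul, inv_mul_cancel₀ hpos.ne', one_smul]

theorem exists_add_zsmul_mem_convexHull {E : Type*} [AddCommGroup E] [Module ℝ E]
    (u e n : E) {m h : ℤ} (hm : 0 < m) (hh : 0 < h) (β : ℤ) :
    ∃ k : ℤ, u + e + k • n ∈ convexHull ℝ {u, u + m • n, u + h • e + β • n} := by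
  set δ := (-β) % h
  have hδ₀ : 0 ≤ δ := Int.emod_nonneg _ hh.ne'
  have hδh : δ < h := Int.emod_lt_of_pos _ hh
  have hk : β + δ = h * -((-β) / h) := by linear_combination Int.emod_def (-β) h
  refine ⟨-((-β) / h), mem_convexHull_triple_of_smul_eq (α := h * m - m - δ) (β := δ) (γ := m)
    (by norm_cast; nlinarith) (by exact_mod_cast hδ₀) (by exact_mod_cast hm.le)
    (by norm_cast; nlinarith) ?_⟩
  simp only [← Int.cast_smul_eq_zsmul ℝ]
  linear_combination (norm := module) (congrArg (Int.cast : ℤ → ℝ) hk) • (-(m : ℝ) • n)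

theorem eq_smul_add_smul_perp {a e : Fin 2 → ℤ} (he : a ⬝ᵥ e = 1) (t : Fin 2 → ℤ) :
    t = (a ⬝ᵥ t) • e + (e 0 * t 1 - e 1 * t 0) • ![-a 1, a 0] := by
  simp only [dotProduct, Fin.sum_univ_two] at he ⊢
  ext i
  fin_cases i
  · simp; linear_combination (-t 0) * he
  · simp; linear_combination (-t 1) * he

theorem exists_lattice_point_next_level {a u v x : Fin 2 → ℤ} (ha : Int.gcd (a 0) (a 1) = 1)
    (huv : u ≠ v) (hv : a ⬝ᵥ v = a ⬝ᵥ u) (hx : a ⬝ᵥ u + 2 ≤ a ⬝ᵥ x) :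
    ∃ y : Fin 2 → ℤ, a ⬝ᵥ y = a ⬝ᵥ u + 1 ∧
      (Int.cast ∘ y : Fin 2 → ℝ) ∈ convexHull ℝ {Int.cast ∘ u, Int.cast ∘ v, Int.cast ∘ x} := by
  set e : Fin 2 → ℤ := ![Int.gcdA (a 0) (a 1), Int.gcdB (a 0) (a 1)]
  have he : a ⬝ᵥ e = 1 := by
    simpa [e, dotProduct, Fin.sum_univ_two, ha] using (Int.gcd_eq_gcd_ab (a 0) (a 1)).symm
  set n : Fin 2 → ℤ := ![-a 1, a 0]
  have hn : a ⬝ᵥ n = 0 := by simp [n, dotProduct, Fin.sum_univ_two]; ring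
  have hdecomp (w t : Fin 2 → ℤ) : ∃ β : ℤ, t = w + (a ⬝ᵥ t - a ⬝ᵥ w) • e + β • n :=
    ⟨_, by rw [add_assoc, ← dotProduct_sub]; exact eq_add_of_sub_eq' (eq_smul_add_smul_perp he _)⟩
  wlog hm : ∃ m : ℤ, 0 < m ∧ v = u + m • n generalizing u v
  · obtain ⟨m, hvm⟩ := hdecomp u v
    rw [hv, sub_self, zero_smul, add_zero] at hvm
    rcases lt_trichotomy m 0 with hneg | rfl | hpos
    · have hum : u = v + -m • n := by rw [hvm, neg_smul, add_neg_cancel_right]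
      obtain ⟨y, hy, hyS⟩ := this huv.symm hv.symm (hv ▸ hx) ⟨-m, neg_pos.2 hneg, hum⟩
      exact ⟨y, hv ▸ hy, Set.insert_comm _ _ _ ▸ hyS⟩
    · exact absurd (by simpa using hvm) huv.symm
    · exact absurd ⟨m, hpos, hvm⟩ hm
  obtain ⟨m, hm, rfl⟩ := hm
  obtain ⟨β, hxβ⟩ := hdecomp u x
  let φ : (Fin 2 → ℤ) →+ (Fin 2 → ℝ) := (Int.castAddHom ℝ).compLeft (Fin 2)
  obtain ⟨k, hk⟩ := exists_add_zsmul_mem_convexHull (φ u) (φ e) (φ n) hm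
    (by omega : 0 < a ⬝ᵥ x - a ⬝ᵥ u) β
  refine ⟨u + e + k • n, by rw [dotProduct_add, dotProduct_add, dotProduct_smul, hn, he]; simp, ?_⟩
  change φ _ ∈ convexHull ℝ {φ u, φ (u + m • n), φ x}
  rw [hxβ]
  simpa only [map_add, map_zsmul] using hk

section Cube

variable {d n : ℕ}

def toIntVec (x : Fin d → Fin n) : Fin d → ℤ := fun i => (x i : ℤ)

theorem intCast_comp_toIntVec (x : Fin d → Fin n) :
    (Int.cast ∘ toIntVec x : Fin d → ℝ) = toR x := by
  ext i; simp [toIntVec, toR]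

theorem toR_injective : Function.Injective (toR : (Fin d → Fin n) → Fin d → ℝ) :=
  fun x y h => funext fun i => Fin.ext <| by simpa [toR] using congrFun h i

theorem intCast_dotProduct_toR (a : Fin d → ℤ) (x : Fin d → Fin n) :
    (Int.cast ∘ a : Fin d → ℝ) ⬝ᵥ toR x = ((a ⬝ᵥ toIntVec x : ℤ) : ℝ) := by
  rw [← intCast_comp_toIntVec]
  simpa using (RingHom.map_dotProduct (Int.castRingHom ℝ) a (toIntVec x)).symm

theorem exists_toIntVec_eq_of_mem_convexHull {S : Set (Fin d → ℝ)}
    (hS : S ⊆ Set.range (toR : (Fin d → Fin n) → Fin d → ℝ)) {y : Fin d → ℤ}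
    (hy : (Int.cast ∘ y : Fin d → ℝ) ∈ convexHull ℝ S) : ∃ x : Fin d → Fin n, toIntVec x = y := by
  have hbox : convexHull ℝ S ⊆ Set.Icc 0 fun _ => (n : ℝ) - 1 := by
    refine convexHull_min (hS.trans (Set.range_subset_iff.2 fun x => ⟨fun i => ?_, fun i => ?_⟩))
      (convex_Icc _ _)
    · simp [toR]
    · have : ((x i : ℕ) : ℝ) + 1 ≤ n := by exact_mod_cast (x i).isLt
      simp only [toR]; linarith
  obtain ⟨h0, h1⟩ := hbox hy
  have hy0 (i : Fin d) : 0 ≤ y i := by simpa using h0 i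
  have hyn (i : Fin d) : y i < n := by
    have : (y i : ℝ) + 1 ≤ n := by linarith [h1 i, show ((Int.cast ∘ y) i : ℝ) = y i from rfl]
    exact_mod_cast this
  refine ⟨fun i => ⟨(y i).toNat, by have := hy0 i; have := hyn i; omega⟩, ?_⟩
  ext i
  simp [toIntVec, hy0 i]

end Cube

theorem intCast_vecCons_dotProduct (a₁ a₂ : ℤ) (y : Fin 2 → ℝ) :
    (Int.cast ∘ ![a₁, a₂] : Fin 2 → ℝ) ⬝ᵥ y = a₁ * y 0 + a₂ * y 1 := by
  simp [dotProduct, Fin.sum_univ_two]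

section ThresholdFunction

variable {n : ℕ} {f : (Fin 2 → Fin n) → Bool}

theorem exists_isEdgeIneq_violated (harea : (interior (hullOne 2 n f)).Nonempty)
    {z : Fin 2 → Fin n} (hz : toR z ∉ hullOne 2 n f) :
    ∃ a₁ a₂ a₀ : ℤ, IsEdgeIneq (hullOne 2 n f) a₁ a₂ a₀ ∧
      (a₀ : ℝ) + 1 ≤ a₁ * toR z 0 + a₂ * toR z 1 := by
  obtain ⟨p, _, ⟨u, hu, rfl⟩, _, ⟨v, hv, rfl⟩, huv, hmax, hvu, hz'⟩ :=
    exists_edge_separating (Set.toFinite _) harea hz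
  have hw : toIntVec v - toIntVec u ≠ 0 := sub_ne_zero.2 fun h =>
    huv (by rw [← intCast_comp_toIntVec, ← intCast_comp_toIntVec, h])
  have hpw : p ⬝ᵥ (Int.cast ∘ (toIntVec v - toIntVec u)) = 0 := by
    have : (Int.cast ∘ (toIntVec v - toIntVec u) : Fin 2 → ℝ) = toR v - toR u := by
      rw [← intCast_comp_toIntVec, ← intCast_comp_toIntVec]; ext; simp
    rw [this, dotProduct_sub, hvu, sub_self]
  obtain ⟨a, hgcd, κ, hκ, rfl⟩ :=
    exists_primitive_normal (by rintro rfl; simp at hz') hw hpw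
  obtain ⟨a₁, a₂, rfl⟩ : ∃ a₁ a₂ : ℤ, a = ![a₁, a₂] := ⟨a 0, a 1, by ext i; fin_cases i <;> rfl⟩
  simp only [smul_dotProduct, smul_eq_mul, intCast_dotProduct_toR] at hmax hvu hz'
  have hlev : ∀ y ∈ toR '' {z | f z = true},
      (Int.cast ∘ ![a₁, a₂] : Fin 2 → ℝ) ⬝ᵥ y ≤ ![a₁, a₂] ⬝ᵥ toIntVec u :=
    fun y hy => by
      have := hmax y hy
      rw [← intCast_dotProduct_toR] at this ⊢
      exact le_of_mul_le_mul_left this hκ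
  refine ⟨a₁, a₂, ![a₁, a₂] ⬝ᵥ toIntVec u, ⟨hgcd, fun y hy => ?_, toR u,
    subset_convexHull ℝ _ ⟨u, hu, rfl⟩, toR v, subset_convexHull ℝ _ ⟨v, hv, rfl⟩, huv, ?_, ?_⟩, ?_⟩
    <;> simp only [← intCast_vecCons_dotProduct, intCast_dotProduct_toR]
  · exact dotProduct_le_of_mem_convexHull hlev hy
  · exact_mod_cast mul_left_cancel₀ hκ.ne' hvu
  · have hlt : ![a₁, a₂] ⬝ᵥ toIntVec u < ![a₁, a₂] ⬝ᵥ toIntVec z := by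
      exact_mod_cast lt_of_mul_lt_mul_left hz' hκ.le
    exact_mod_cast hlt

theorem exists_false_mem_convexHull_insert (hf : LatticeConvex f) {a₁ a₂ a₀ : ℤ}
    (hedge : IsEdgeIneq (hullOne 2 n f) a₁ a₂ a₀) {x : Fin 2 → Fin n}
    (hx : (a₀ : ℝ) + 1 < a₁ * toR x 0 + a₂ * toR x 1) :
    ∃ y, y ≠ x ∧ f y = false ∧ toR y ∈ convexHull ℝ (toR '' {z | f z = true} ∪ {toR x}) := by
  set a : Fin 2 → ℤ := ![a₁, a₂]
  obtain ⟨hgcd, hle, u, hu, v, hv, huv, hu₀, hv₀⟩ := hedge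
  simp only [← intCast_vecCons_dotProduct] at hle hu₀ hv₀ hx
  obtain ⟨_, ⟨s, hsM, rfl⟩, _, ⟨t, htM, rfl⟩, hst, hs₀, ht₀⟩ :=
    exists_ne_dotProduct_eq_of_mem_convexHull (Set.toFinite _)
      (fun s hs => hle s (subset_convexHull ℝ _ hs)) hu hv huv hu₀ hv₀
  rw [intCast_dotProduct_toR] at hs₀ ht₀ hx
  have hs₀' : a ⬝ᵥ toIntVec s = a₀ := by exact_mod_cast hs₀
  have ht₀' : a ⬝ᵥ toIntVec t = a₀ := by exact_mod_cast ht₀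
  have hx' : a₀ + 1 < a ⬝ᵥ toIntVec x := by exact_mod_cast hx
  obtain ⟨y, hy, hyT⟩ := exists_lattice_point_next_level hgcd
    (fun h => hst (by rw [← intCast_comp_toIntVec, h, intCast_comp_toIntVec]))
    (ht₀'.trans hs₀'.symm) (by omega : a ⬝ᵥ toIntVec s + 2 ≤ a ⬝ᵥ toIntVec x)
  simp only [intCast_comp_toIntVec] at hyT
  have hsub : ({toR s, toR t, toR x} : Set (Fin 2 → ℝ)) ⊆ toR '' {z | f z = true} ∪ {toR x} := by
    rintro _ (rfl | rfl | rfl)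
    · exact Or.inl ⟨s, hsM, rfl⟩
    · exact Or.inl ⟨t, htM, rfl⟩
    · exact Or.inr rfl
  have hyS := convexHull_mono hsub hyT
  obtain ⟨y, rfl⟩ := exists_toIntVec_eq_of_mem_convexHull
    (Set.union_subset (Set.image_subset_range _ _) (Set.singleton_subset_iff.2 ⟨x, rfl⟩)) hyS
  rw [intCast_comp_toIntVec] at hyS
  refine ⟨y, fun hyx => by rw [hyx] at hy; omega, ?_, hyS⟩
  rw [← Bool.not_eq_true, hf y]
  intro hmem
  have := hle _ hmem
  rw [intCast_dotProduct_toR, hy, hs₀'] at this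
  push_cast at this
  linarith

end ThresholdFunction

theorem stmt12_general (n : ℕ) (f : (Fin 2 → Fin n) → Bool)
    (hf : f ∈ TStar 2 n) (harea : (interior (hullOne 2 n f)).Nonempty) :
    DSet 2 n f = {x | f x = false ∧ toR x ∈ Pprime n f \ hullOne 2 n f} := by
  have hfalse (y : Fin 2 → Fin n) : f y = false ↔ toR y ∉ hullOne 2 n f := by
    rw [← Bool.not_eq_true, hf y]
  ext x
  refine ⟨fun ⟨hx, hD⟩ => ⟨hx, fun a₁ a₂ a₀ hedge => ?_, (hfalse x).1 hx⟩,
    fun ⟨hx, hxP, _⟩ => ⟨hx, fun y hy hyf => ?_⟩⟩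
  · by_contra! hlt
    obtain ⟨y, hyx, hyf, hy⟩ := exists_false_mem_convexHull_insert hf hedge hlt
    exact hyx (hD y hy hyf)
  · obtain ⟨a₁, a₂, a₀, hedge, hya⟩ := exists_isEdgeIneq_violated harea ((hfalse y).1 hyf)
    have hxa := hxP a₁ a₂ a₀ hedge
    obtain ⟨-, hle, -⟩ := hedge
    simp only [← intCast_vecCons_dotProduct] at hle hxa hya
    rw [Set.union_singleton] at hy
    exact toR_injective <| eq_of_mem_convexHull_insert
      (convexHull_nonempty_iff.1 (harea.mono interior_subset)) (lt_add_one (a₀ : ℝ))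
      (fun s hs => hle s (subset_convexHull ℝ _ hs)) hxa hy hya

/-- `D(f) = ΔP(f) ∩ M₀(f)` for planar `f` with `P(f)` of positive area. -/
theorem stmt12 (n : ℕ) (hn : 2 ≤ n) (f : (Fin 2 → Fin n) → Bool)
    (hf : f ∈ TStar 2 n) (harea : (interior (hullOne 2 n f)).Nonempty) :
    DSet 2 n f = {x | f x = false ∧ toR x ∈ Pprime n f \ hullOne 2 n f} :=
  stmt12_general n f hf harea
end
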